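/- arXiv:1312.7115 — 3 statements merged into one kernel-verified Lean document; each statement's English description precedes it below -/
import Mathlib

section
/- The integral of log Γ over the unit interval equals half the logarithm of 2π; that is, ∫_0^1 log Γ(x) dx = (1/2)·log(2π). -/
open Real

/-!
Pairing `x` with `1 - x` and using Euler's reflection formula `Γ(x) Γ(1 - x) = π / sin (π x)`
gives `2 ∫₀¹ log Γ = log π - ∫₀¹ log (sin (π x)) dx`, and the last integral is `-log 2`.
-/

open MeasureTheory Set intervalIntegral

namespace Real

theorem log_Gamma_eq_log_Gamma_add_one_sub_log {x : ℝ} (hx : 0 < x) :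
    log (Gamma x) = log (Gamma (x + 1)) - log x := by
  rw [Gamma_add_one hx.ne', log_mul hx.ne' (Gamma_pos_of_pos hx).ne']
  ring

theorem log_Gamma_add_log_Gamma_one_sub {x : ℝ} (hx₀ : 0 < x) (hx₁ : x < 1) :
    log (Gamma x) + log (Gamma (1 - x)) = log π - log (sin (π * x)) := by
  have hsin : 0 < sin (π * x) := sin_pos_of_pos_of_lt_pi (by positivity) (by nlinarith [pi_pos])
  rw [← log_mul (Gamma_pos_of_pos hx₀).ne' (Gamma_pos_of_pos (by linarith)).ne',
    Gamma_mul_Gamma_one_sub, log_div pi_pos.ne' hsin.ne']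

/-- The singularity of `log Γ` at `0` is that of `-log`, since `Γ(x) = Γ(x + 1) / x`. -/
theorem intervalIntegrable_log_Gamma {a b : ℝ} (ha : 0 ≤ a) (hb : 0 ≤ b) :
    IntervalIntegrable (fun x => log (Gamma x)) volume a b := by
  have hcont : ContinuousOn (fun x => log (Gamma (x + 1))) (uIcc a b) := by
    refine ContinuousOn.log ?_ fun x hx => (Gamma_pos_of_pos ?_).ne'
    · refine differentiableOn_Gamma_Ioi.continuousOn.comp (by fun_prop) fun x hx => ?_
      exact show 0 < x + 1 by linarith [le_min ha hb |>.trans hx.1]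
    · linarith [le_min ha hb |>.trans hx.1]
  refine (hcont.intervalIntegrable.sub intervalIntegrable_log').congr_uIoo fun x hx => ?_
  exact (log_Gamma_eq_log_Gamma_add_one_sub_log (lt_of_le_of_lt (le_min ha hb) hx.1)).symm

theorem integral_log_sin_pi_mul : ∫ x in (0 : ℝ)..1, log (sin (π * x)) = -log 2 := by
  rw [integral_comp_mul_left (fun x => log (sin x)) pi_pos.ne', mul_zero, mul_one,
    integral_log_sin_zero_pi, smul_eq_mul]
  field_simp [pi_pos.ne']

end Real

/-- The Raabe-type integral: `∫_0^1 log Γ(x) dx = (1/2)·log(2π)`. -/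
theorem integral_logGamma_unit :
    ∫ x in (0:ℝ)..1, Real.log (Real.Gamma x) = (1 / 2) * Real.log (2 * π) := by
  have hint := intervalIntegrable_log_Gamma le_rfl zero_le_one
  have hreflect : ∫ x in (0:ℝ)..1, log (Gamma (1 - x)) = ∫ x in (0:ℝ)..1, log (Gamma x) := by
    simpa using integral_comp_sub_left (fun x => log (Gamma x)) (1 : ℝ) (a := 0) (b := 1)
  have hsum : 2 * ∫ x in (0:ℝ)..1, log (Gamma x) = log π + log 2 :=
    calc 2 * ∫ x in (0:ℝ)..1, log (Gamma x)
        = ∫ x in (0:ℝ)..1, (log (Gamma x) + log (Gamma (1 - x))) := by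
          rw [integral_add hint (by simpa using (hint.comp_sub_left 1).symm), hreflect]; ring
      _ = ∫ x in (0:ℝ)..1, (log π - log (sin (π * x))) :=
          integral_congr_Ioo_of_le zero_le_one fun x hx => log_Gamma_add_log_Gamma_one_sub hx.1 hx.2
      _ = log π + log 2 := by
          rw [integral_sub intervalIntegrable_const
            (by simpa [pi_ne_zero] using
              (intervalIntegrable_log_sin (a := 0) (b := π)).comp_mul_left (c := π)),
            integral_log_sin_pi_mul, intervalIntegral.integral_const]
          simp
  rw [log_mul two_ne_zero pi_pos.ne']
  linarith
end

section
/- For every real number x that is not an integer, log Γ(⟨x⟩) + log Γ(⟨1 − x⟩) = log(2π) + ∑_{n=1}^∞ cos(2π n x)/n, where ⟨t⟩ denotes the fractional part of t and the series on the right converges. -/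
/-!
For `t = ⟨x⟩ ∈ (0, 1)` Euler's reflection formula `Γ(t) Γ(1 - t) = π / sin (π t)` turns the left
side into `log π - log |sin (π x)|`. On the other side `z = exp (2π i x) ≠ 1` lies on the unit
circle, so `∑ zⁿ / n` converges by Dirichlet's test, and by Abel's limit theorem its sum is the
boundary value `-log (1 - z)` of the Taylor series of `-log (1 - w)`. Taking real parts,
`∑ cos (2π n x) / n = -log |1 - z| = -log |2 sin (π x)|`.
-/

open Real Filter Finset

theorem Finset.sum_Icc_one_eq_sum_range_succ {M : Type*} [AddCommMonoid M] {f : ℕ → M}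
    (hf : f 0 = 0) (N : ℕ) : ∑ n ∈ Icc 1 N, f n = ∑ n ∈ range (N + 1), f n := by
  rw [range_eq_Ico, sum_eq_sum_Ico_succ_bot N.succ_pos, hf, zero_add]
  rfl

theorem norm_geom_sum_le_of_norm_le_one {𝕜 : Type*} [NormedDivisionRing 𝕜] {z : 𝕜}
    (hz : ‖z‖ ≤ 1) (hz1 : z ≠ 1) (n : ℕ) :
    ‖∑ i ∈ range n, z ^ i‖ ≤ 2 / ‖1 - z‖ := by
  have hnum : ‖1 - z ^ n‖ ≤ 2 :=
    calc ‖1 - z ^ n‖ ≤ ‖(1 : 𝕜)‖ + ‖z ^ n‖ := norm_sub_le _ _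
      _ ≤ 1 + 1 := add_le_add norm_one.le (by rw [norm_pow]; exact pow_le_one₀ (norm_nonneg _) hz)
      _ = 2 := one_add_one_eq_two
  rw [geom_sum_eq hz1, ← neg_div_neg_eq, neg_sub, neg_sub, norm_div]
  gcongr

theorem cauchySeq_sum_pow_div {𝕜 : Type*} [RCLike 𝕜] {z : 𝕜} (hz : ‖z‖ ≤ 1) (hz1 : z ≠ 1) :
    CauchySeq fun N ↦ ∑ i ∈ range N, z ^ i / i := by
  have hbounded (n : ℕ) : ‖∑ i ∈ range n, z ^ (i + 1)‖ ≤ 2 / ‖1 - z‖ := by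
    simp_rw [pow_succ', ← mul_sum]
    exact (norm_mul_le _ _).trans
      (mul_le_of_le_one_left (norm_nonneg _) hz |>.trans (norm_geom_sum_le_of_norm_le_one hz hz1 n))
  have hanti : Antitone fun i : ℕ ↦ ((i : ℝ) + 1)⁻¹ := fun a b hab ↦ by
    dsimp only
    gcongr
  have hlim : Tendsto (fun i : ℕ ↦ ((i : ℝ) + 1)⁻¹) atTop (nhds 0) := by
    simpa only [one_div] using tendsto_one_div_add_atTop_nhds_zero_nat (𝕜 := ℝ)
  rw [← cauchySeq_shift 1]
  convert hanti.cauchySeq_series_mul_of_tendsto_zero_of_bounded hlim hbounded using 2 with n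
  rw [sum_range_succ']
  simp [RCLike.real_smul_eq_coe_mul, div_eq_inv_mul]

namespace Complex

theorem one_sub_mem_slitPlane_of_norm_le_one {z : ℂ} (hz : ‖z‖ ≤ 1) (hz1 : z ≠ 1) :
    1 - z ∈ slitPlane := by
  rw [mem_slitPlane_iff, sub_re, one_re, sub_im, one_im, sub_pos, zero_sub, neg_ne_zero]
  by_contra! h
  have hre : z.re ≤ 1 := (re_le_norm z).trans hz
  exact hz1 (Complex.ext (by simp; linarith [h.1]) (by simp [h.2]))

theorem tendsto_sum_pow_div_neg_log {z : ℂ} (hz : ‖z‖ ≤ 1) (hz1 : z ≠ 1) :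
    Tendsto (fun N ↦ ∑ i ∈ range N, z ^ i / i) atTop (nhds (-log (1 - z))) := by
  obtain ⟨L, hL⟩ := cauchySeq_tendsto_of_complete (cauchySeq_sum_pow_div hz hz1)
  suffices L = -log (1 - z) from this ▸ hL
  have habel := tendsto_tsum_powerSeries_nhdsWithin_lt hL
  have hinside : ∀ᶠ r : ℝ in nhdsWithin 1 (Set.Iio 1),
      ∑' n : ℕ, z ^ n / n * (r : ℂ) ^ n = -log (1 - r * z) := by
    filter_upwards [Ioo_mem_nhdsLT one_pos] with r hr
    have hrz : ‖(r : ℂ) * z‖ < 1 := by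
      rw [norm_mul, norm_real, Real.norm_of_nonneg hr.1.le]
      exact mul_lt_one_of_nonneg_of_lt_one_left hr.1.le hr.2 hz
    rw [← (hasSum_taylorSeries_neg_log hrz).tsum_eq]
    exact tsum_congr fun n ↦ by rw [mul_pow]; ring
  have hcont : ContinuousAt (fun w : ℂ ↦ -log (1 - w * z)) 1 :=
    ((continuousAt_const.sub (continuousAt_id.mul continuousAt_const)).clog
      (by simpa using one_sub_mem_slitPlane_of_norm_le_one hz hz1)).neg
  have hofReal : Tendsto ofReal (nhdsWithin 1 (Set.Iio 1)) (nhds 1) := by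
    simpa using (continuous_ofReal.tendsto 1).mono_left nhdsWithin_le_nhds
  refine tendsto_nhds_unique
    (habel.congr' (f₂ := fun w ↦ -log (1 - w * z)) (eventually_map.mpr hinside)) ?_
  simpa using hcont.tendsto.mono_left hofReal

end Complex

theorem tendsto_sum_cos_div {x : ℝ} (hx : sin (π * x) ≠ 0) :
    Tendsto (fun N ↦ ∑ n ∈ range N, cos (2 * π * n * x) / n) atTop
      (nhds (-log |2 * sin (π * x)|)) := by
  set z := Complex.exp (Complex.I * (2 * π * x : ℝ))
  have hnorm : ‖1 - z‖ = |2 * sin (π * x)| := by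
    rw [norm_sub_rev, Complex.norm_exp_I_mul_ofReal_sub_one, Real.norm_eq_abs]
    ring_nf
  have hz1 : z ≠ 1 := by
    rintro h
    rw [h, sub_self, norm_zero, eq_comm, abs_eq_zero, mul_eq_zero] at hnorm
    exact hx (hnorm.resolve_left two_ne_zero)
  have hterm (n : ℕ) : (z ^ n / n).re = cos (2 * π * n * x) / n := by
    rw [← Complex.exp_nat_mul, Complex.div_natCast_re,
      show (n : ℂ) * (Complex.I * (2 * π * x : ℝ)) = (2 * π * n * x : ℝ) * Complex.I by
        push_cast; ring, Complex.exp_ofReal_mul_I_re]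
  have hre := (Complex.continuous_re.tendsto _).comp
    (Complex.tendsto_sum_pow_div_neg_log (Complex.norm_exp_I_mul_ofReal _).le hz1)
  rw [Function.comp_def, Complex.neg_re, Complex.log_re, hnorm] at hre
  refine hre.congr fun N ↦ ?_
  rw [Complex.re_sum]
  exact sum_congr rfl fun n _ ↦ hterm n

theorem abs_sin_pi_mul_fract (x : ℝ) : |sin (π * Int.fract x)| = |sin (π * x)| := by
  conv_rhs => rw [← Int.fract_add_floor x, mul_add, mul_comm π (⌊x⌋ : ℝ), sin_add_int_mul_pi,
    abs_mul, abs_neg_one_zpow, one_mul]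

theorem Int.fract_one_sub {R : Type*} [Ring R] [LinearOrder R] [IsStrictOrderedRing R]
    [FloorRing R] {x : R} (hx : Int.fract x ≠ 0) :
    Int.fract (1 - x) = 1 - Int.fract x := by
  rw [sub_eq_neg_add, Int.fract_add_one, Int.fract_neg hx]

theorem log_Gamma_fract_add_log_Gamma_fract_one_sub {x : ℝ} (hx : Int.fract x ≠ 0) :
    log (Gamma (Int.fract x)) + log (Gamma (Int.fract (1 - x))) = log π - log |sin (π * x)| := by
  have ht0 : 0 < Int.fract x := (Int.fract_nonneg x).lt_of_ne' hx
  have ht1 : Int.fract x < 1 := Int.fract_lt_one x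
  have hsin : sin (π * Int.fract x) ≠ 0 :=
    (sin_pos_of_pos_of_lt_pi (by positivity) (by nlinarith [pi_pos])).ne'
  rw [Int.fract_one_sub hx,
    ← log_mul (Gamma_pos_of_pos ht0).ne' (Gamma_pos_of_pos (by linarith)).ne',
    Gamma_mul_Gamma_one_sub, log_div pi_ne_zero hsin, ← log_abs (sin _), abs_sin_pi_mul_fract]

/-- For non-integer real `x`,
`log Γ(⟨x⟩) + log Γ(⟨1−x⟩) = log(2π) + ∑_{n≥1} cos(2πnx)/n`, the series converging
(in the sense of its partial sums); here `⟨t⟩` is the fractional part of `t`. -/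
theorem logGamma_reflection_fourier (x : ℝ) (hx : ∀ m : ℤ, x ≠ (m : ℝ)) :
    ∃ S : ℝ,
      Tendsto (fun N : ℕ => ∑ n ∈ Finset.Icc 1 N, Real.cos (2 * π * n * x) / n)
        atTop (nhds S) ∧
      Real.log (Real.Gamma (Int.fract x)) + Real.log (Real.Gamma (Int.fract (1 - x)))
        = Real.log (2 * π) + S := by
  have hfract : Int.fract x ≠ 0 := Int.fract_ne_zero_iff.mpr fun ⟨m, hm⟩ ↦ hx m hm.symm
  have hsin : sin (π * x) ≠ 0 :=
    sin_ne_zero_iff.mpr fun m hm ↦ hx m (mul_left_cancel₀ pi_ne_zero (hm.symm.trans (mul_comm _ _)))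
  refine ⟨-log |2 * sin (π * x)|, ?_, ?_⟩
  · simp_rw [sum_Icc_one_eq_sum_range_succ (f := fun n : ℕ ↦ cos (2 * π * n * x) / n) (by simp)]
    exact (tendsto_sum_cos_div hsin).comp (tendsto_add_atTop_nat 1)
  · rw [log_Gamma_fract_add_log_Gamma_fract_one_sub hfract, abs_mul, abs_two,
      log_mul two_ne_zero (abs_ne_zero.mpr hsin), log_mul two_ne_zero pi_ne_zero]
    ring
end

section
/- For every positive integer k and every real number x such that kx is not an integer, one has ∑_{ℓ=0}^{k−1} log Γ(⟨x + ℓ/k⟩) = ((k−1)/2)·log(2π) − (log k)·(⟨k x⟩ − 1/2) + log Γ(⟨k x⟩). -/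
/-!
Write `x + ℓ/k = (⟨kx⟩ + (⌊kx⌋ + ℓ))/k`. The summand is `k`-periodic in the integer `⌊kx⌋ + ℓ`,
so the sum equals `∑_{j<k} log Γ((s + j)/k)` with `s = ⟨kx⟩ ∈ (0, 1)`, and the claim becomes
Gauss's multiplication formula. By Bohr–Mollerup, `k^(s-1) ∏_{j<k} Γ((s + j)/k)` is `Γ(s)` times
its value at `s = 1`; the square of that constant `∏_{j=1}^{k-1} Γ(j/k)` is computed by pairing
`j` with `k - j` in Euler's reflection formula, using `∏_{j=1}^{k-1} 2 sin(πj/k) = k`, the norm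
of `∏ (1 - ζ^j)` for a primitive `k`-th root of unity `ζ`.
-/

open Real Finset

theorem prod_range_two_mul_sin_pi_mul_div (n : ℕ) :
    ∏ j ∈ range n, 2 * sin (π * (j + 1) / (n + 1)) = n + 1 := by
  have hμ := Complex.isPrimitiveRoot_exp (n + 1) n.succ_ne_zero
  have h := congrArg norm hμ.prod_one_sub_pow_eq_order
  have hfactor : ∀ j ∈ range n,
      ‖1 - Complex.exp (2 * π * Complex.I / (n + 1 : ℕ)) ^ (j + 1)‖
        = 2 * sin (π * (j + 1) / (n + 1)) := by
    intro j hj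
    have hj : (j : ℝ) + 1 < n + 1 := by exact_mod_cast Nat.succ_lt_succ (mem_range.mp hj)
    have hsin : 0 < sin (π * (j + 1) / (n + 1)) := by
      apply sin_pos_of_pos_of_lt_pi (by positivity)
      rw [div_lt_iff₀ (by positivity)]
      nlinarith [pi_pos]
    rw [← Complex.exp_nat_mul, norm_sub_rev,
      show ((j + 1 : ℕ) : ℂ) * (2 * π * Complex.I / (n + 1 : ℕ))
        = Complex.I * ((2 * π * (j + 1) / (n + 1) : ℝ) : ℂ) by push_cast; field_simp,
      Complex.norm_exp_I_mul_ofReal_sub_one,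
      show 2 * π * (j + 1) / (n + 1) / 2 = π * (j + 1) / (n + 1) by ring,
      norm_of_nonneg (mul_pos two_pos hsin).le]
  rw [Complex.norm_prod, prod_congr rfl hfactor] at h
  exact_mod_cast h.trans (by norm_cast)

theorem prod_range_Gamma_add_one_div_sq (n : ℕ) :
    (∏ j ∈ range n, Gamma ((j + 1) / (n + 1))) ^ 2 = (2 * π) ^ n / (n + 1) := by
  have hreflect : ∏ j ∈ range n, Gamma (1 - (j + 1) / (n + 1))
      = ∏ j ∈ range n, Gamma ((j + 1) / (n + 1)) := by
    rw [← prod_range_reflect]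
    refine prod_congr rfl fun j hj => ?_
    have hj := mem_range.mp hj
    rw [show n - 1 - j = n - (j + 1) by omega, Nat.cast_sub (by omega)]
    push_cast
    field_simp
    ring_nf
  calc (∏ j ∈ range n, Gamma ((j + 1) / (n + 1))) ^ 2
      = ∏ j ∈ range n, Gamma ((j + 1) / (n + 1)) * Gamma (1 - (j + 1) / (n + 1)) := by
        rw [prod_mul_distrib, hreflect, sq]
    _ = ∏ j ∈ range n, 2 * π / (2 * sin (π * (j + 1) / (n + 1))) := by
        refine prod_congr rfl fun j _ => ?_
        rw [Gamma_mul_Gamma_one_sub, mul_div_mul_left _ _ two_ne_zero, mul_div_assoc]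
    _ = (2 * π) ^ n / (n + 1) := by
        rw [prod_div_distrib, prod_const, card_range, prod_range_two_mul_sin_pi_mul_div]

theorem two_mul_sum_range_log_Gamma_one_add_div {k : ℕ} (hk : 0 < k) :
    2 * ∑ j ∈ range k, log (Gamma ((1 + j) / k)) = ((k : ℝ) - 1) * log (2 * π) - log k := by
  obtain ⟨n, rfl⟩ := Nat.exists_eq_add_one_of_ne_zero hk.ne'
  have hsq := congrArg log (prod_range_Gamma_add_one_div_sq n)
  rw [log_pow, log_div (by positivity) (by positivity), log_pow,
    log_prod fun j _ => (Gamma_pos_of_pos (by positivity)).ne'] at hsq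
  rw [sum_range_succ, Nat.cast_add_one,
    show ((1 : ℝ) + n) / (n + 1) = 1 by rw [add_comm, div_self (by positivity)],
    Gamma_one, log_one, add_zero]
  simp only [add_comm (1 : ℝ)]
  push_cast at hsq
  linarith

theorem convexOn_finset_sum {𝕜 E β ι : Type*} [Semiring 𝕜] [PartialOrder 𝕜] [AddCommMonoid E]
    [AddCommMonoid β] [PartialOrder β] [IsOrderedAddMonoid β] [SMul 𝕜 E] [Module 𝕜 β]
    {s : Set E} (hs : Convex 𝕜 s) (t : Finset ι) {f : ι → E → β}
    (hf : ∀ i ∈ t, ConvexOn 𝕜 s (f i)) : ConvexOn 𝕜 s (fun x => ∑ i ∈ t, f i x) := by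
  classical
  induction t using Finset.induction with
  | empty => simpa using convexOn_const (0 : β) hs
  | insert i t hi ih =>
    simp_rw [sum_insert hi]
    exact (hf i (mem_insert_self i t)).add (ih fun j hj => hf j (mem_insert_of_mem hj))

theorem convexOn_log_Gamma_add_div {a b : ℝ} (ha : 0 < a) (hb : 0 ≤ b) :
    ConvexOn ℝ (Set.Ioi 0) (fun s => log (Gamma ((s + b) / a))) := by
  refine ⟨convex_Ioi 0, fun x hx y hy α β hα hβ hαβ => ?_⟩
  have hx' : (x + b) / a ∈ Set.Ioi 0 := div_pos (add_pos_of_pos_of_nonneg hx hb) ha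
  have hy' : (y + b) / a ∈ Set.Ioi 0 := div_pos (add_pos_of_pos_of_nonneg hy hb) ha
  have harg : (α • x + β • y + b) / a = α • ((x + b) / a) + β • ((y + b) / a) := by
    simp only [smul_eq_mul]
    linear_combination (-b / a) * hαβ
  simpa only [harg, Function.comp_apply] using convexOn_log_Gamma.2 hx' hy' hα hβ hαβ

noncomputable def gaussProduct (k : ℕ) (s : ℝ) : ℝ :=
  k ^ (s - 1) * (∏ j ∈ range k, Gamma ((s + j) / k)) / ∏ j ∈ range k, Gamma ((1 + j) / k)

section GaussProduct

variable {k : ℕ}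

theorem prod_range_Gamma_add_div_pos {s : ℝ} (hs : 0 < s) :
    0 < ∏ j ∈ range k, Gamma ((s + j) / k) :=
  prod_pos fun j hj => Gamma_pos_of_pos <|
    div_pos (by positivity) (Nat.cast_pos.mpr (j.zero_le.trans_lt (mem_range.mp hj)))

theorem gaussProduct_pos (hk : 0 < k) {s : ℝ} (hs : 0 < s) : 0 < gaussProduct k s := by
  have := prod_range_Gamma_add_div_pos (k := k) hs
  have := prod_range_Gamma_add_div_pos (k := k) one_pos
  unfold gaussProduct
  positivity

theorem gaussProduct_one : gaussProduct k 1 = 1 := by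
  rw [gaussProduct, sub_self, rpow_zero, one_mul,
    div_self (prod_range_Gamma_add_div_pos one_pos).ne']

theorem gaussProduct_add_one (hk : 0 < k) {s : ℝ} (hs : 0 < s) :
    gaussProduct k (s + 1) = s * gaussProduct k s := by
  have hkR : (0 : ℝ) < k := by exact_mod_cast hk
  have hshift : ∏ j ∈ range k, Gamma ((s + 1 + j) / k)
      = s / k * ∏ j ∈ range k, Gamma ((s + j) / k) := by
    have h := (prod_range_succ' (fun j : ℕ => Gamma ((s + j) / k)) k).symm.trans
      (prod_range_succ _ k)
    rw [show (s + k) / k = s / k + 1 by field_simp, Gamma_add_one (by positivity)] at h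
    simp only [Nat.cast_succ, Nat.cast_zero, add_zero, ← add_assoc, add_right_comm s _ 1] at h
    refine mul_right_cancel₀ (Gamma_pos_of_pos (div_pos hs hkR)).ne' ?_
    rw [h]
    ring
  rw [gaussProduct, gaussProduct, hshift, add_sub_cancel_right, rpow_sub_one hkR.ne']
  field_simp

theorem log_gaussProduct_eqOn (hk : 0 < k) :
    Set.EqOn (log ∘ gaussProduct k)
      (fun s => ∑ j ∈ range k, log (Gamma ((s + j) / k)) + s * log k
        - (log k + ∑ j ∈ range k, log (Gamma ((1 + j) / k)))) (Set.Ioi 0) := by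
  intro s hs
  have hkR : (0 : ℝ) < k := by exact_mod_cast hk
  have hΓ {t : ℝ} (ht : 0 < t) : ∀ j ∈ range k, Gamma ((t + j) / k) ≠ 0 :=
    fun _ _ => (Gamma_pos_of_pos (by positivity)).ne'
  rw [Function.comp_apply, gaussProduct,
    log_div (mul_pos (rpow_pos_of_pos hkR _) (prod_range_Gamma_add_div_pos hs)).ne'
      (prod_range_Gamma_add_div_pos one_pos).ne',
    log_mul (rpow_pos_of_pos hkR _).ne' (prod_range_Gamma_add_div_pos hs).ne',
    log_rpow hkR, log_prod (hΓ hs), log_prod (hΓ one_pos)]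
  ring

theorem convexOn_log_gaussProduct (hk : 0 < k) :
    ConvexOn ℝ (Set.Ioi 0) (log ∘ gaussProduct k) := by
  refine (ConvexOn.add_const ?_ _).congr fun s hs =>
    ((log_gaussProduct_eqOn hk hs).trans (sub_eq_add_neg _ _)).symm
  refine (convexOn_finset_sum (convex_Ioi 0) _ fun j _ => ?_).add ?_
  · exact convexOn_log_Gamma_add_div (by exact_mod_cast hk) j.cast_nonneg
  · simpa only [smul_eq_mul, mul_comm, id] using
      (convexOn_id (convex_Ioi (0 : ℝ))).smul (log_natCast_nonneg k)

theorem gaussProduct_eq_Gamma (hk : 0 < k) {s : ℝ} (hs : 0 < s) : gaussProduct k s = Gamma s :=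
  eq_Gamma_of_log_convex (convexOn_log_gaussProduct hk) (gaussProduct_add_one hk)
    (gaussProduct_pos hk) gaussProduct_one hs

end GaussProduct

theorem sum_range_log_Gamma_add_div {k : ℕ} (hk : 0 < k) {s : ℝ} (hs : 0 < s) :
    ∑ j ∈ range k, log (Gamma ((s + j) / k))
      = ((k : ℝ) - 1) / 2 * log (2 * π) - log k * (s - 1 / 2) + log (Gamma s) := by
  have hlog := congrArg log (gaussProduct_eq_Gamma hk hs)
  rw [← Function.comp_apply (f := log), log_gaussProduct_eqOn hk hs] at hlog
  linear_combination hlog + two_mul_sum_range_log_Gamma_one_add_div hk / 2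

theorem Function.Periodic.sum_range_int_add {M : Type*} [AddCancelCommMonoid M] {h : ℤ → M}
    {k : ℕ} (hh : Function.Periodic h k) (n : ℤ) :
    ∑ ℓ ∈ range k, h (n + ℓ) = ∑ ℓ ∈ range k, h ℓ := by
  have hstep (i : ℤ) : ∑ ℓ ∈ range k, h (i + 1 + ℓ) = ∑ ℓ ∈ range k, h (i + ℓ) := by
    have := (sum_range_succ' (fun ℓ : ℕ => h (i + ℓ)) k).symm.trans (sum_range_succ _ k)
    simpa only [Nat.cast_succ, Nat.cast_zero, add_zero, ← add_assoc, add_right_comm i _ 1,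
      hh i, add_left_inj] using this
  induction n using Int.induction_on with
  | zero => simp
  | succ i ih => rw [hstep, ih]
  | pred i ih => rw [← hstep, sub_add_cancel, ih]

theorem sum_range_comp_fract_add_div {M : Type*} [AddCancelCommMonoid M] (g : ℝ → M) (k : ℕ)
    (x : ℝ) :
    ∑ ℓ ∈ range k, g (Int.fract (x + ℓ / k))
      = ∑ j ∈ range k, g ((Int.fract (k * x) + j) / k) := by
  obtain rfl | hk := k.eq_zero_or_pos
  · simp
  have hkR : (0 : ℝ) < k := by exact_mod_cast hk
  set f := Int.fract ((k : ℝ) * x)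
  have hperiodic : Function.Periodic (fun j : ℤ => g (Int.fract ((f + j) / k))) k := fun j => by
    simp only [Int.cast_add, Int.cast_natCast, ← add_assoc, add_div _ (k : ℝ),
      div_self hkR.ne', Int.fract_add_one]
  have hshift (ℓ : ℕ) : x + ℓ / k = (f + (⌊(k : ℝ) * x⌋ + ℓ : ℤ)) / k := by
    rw [Int.cast_add, Int.cast_natCast, ← add_assoc, add_comm f, Int.floor_add_fract]
    field_simp
  have hsmall : ∀ j ∈ range k, Int.fract ((f + j) / k) = (f + j) / k := fun j hj => by
    have hj : (j : ℝ) + 1 ≤ k := by exact_mod_cast mem_range.mp hj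
    rw [Int.fract_eq_self, div_lt_one hkR]
    exact ⟨by positivity, by linarith [Int.fract_lt_one ((k : ℝ) * x)]⟩
  simp_rw [hshift]
  rw [hperiodic.sum_range_int_add]
  exact sum_congr rfl fun j hj => by rw [Int.cast_natCast, hsmall j hj]

/-- Gauss multiplication for the periodized `log Γ`: for a positive integer `k` and real `x`
with `kx` not an integer,
`∑_{ℓ=0}^{k−1} log Γ(⟨x+ℓ/k⟩) = ((k−1)/2)·log(2π) − (log k)·(⟨kx⟩ − 1/2) + log Γ(⟨kx⟩)`,
where `⟨t⟩` is the fractional part of `t`. -/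
theorem logGamma_periodic_multiplication (k : ℕ) (hk : 0 < k) (x : ℝ)
    (hx : ∀ m : ℤ, (k : ℝ) * x ≠ (m : ℝ)) :
    ∑ ℓ ∈ Finset.range k, Real.log (Real.Gamma (Int.fract (x + ℓ / k)))
      = ((k : ℝ) - 1) / 2 * Real.log (2 * π)
        - Real.log k * (Int.fract ((k : ℝ) * x) - 1 / 2)
        + Real.log (Real.Gamma (Int.fract ((k : ℝ) * x))) := by
  have hfract : 0 < Int.fract ((k : ℝ) * x) := Int.fract_pos.mpr (hx _)
  rw [sum_range_comp_fract_add_div (fun t => log (Gamma t)) k x]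
  exact sum_range_log_Gamma_add_div hk hfract
end
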